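/- arXiv:1406.1430 — 3 statements merged into one kernel-verified Lean document; each statement's English description precedes it below -/
import Mathlib

section
/- Let n ≥ 1 and let T^An be the set of multiplicative seminorms x on the Laurent polynomial ring ℂ[z₁^{±1},…,z_n^{±1}] with x(c·1) ≤ ‖c‖ for all c ∈ ℂ, equipped with the topology of pointwise convergence. Then for every x ∈ T^An one has x(z_i) > 0 for each i and log x(e·1) ∈ [0,1] (e = exp(1)), so that Trop(x) := (log x(e·1), (−log x(z₁),…,−log x(z_n))) defines a map Trop : T^An → [0,1] × ℝⁿ. This map is continuous, surjective, and proper in the sense that the preimage of every compact subset of [0,1] × ℝⁿ is compact; consequently Trop is a closed map. -/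
/-- A multiplicative seminorm on a commutative ring `A`. -/
def IsMultSeminorm {A : Type*} [CommRing A] (x : A → ℝ) : Prop :=
  (∀ f, 0 ≤ x f) ∧ x 0 = 0 ∧ x 1 = 1 ∧
    (∀ f g, x (f * g) = x f * x g) ∧ (∀ f g, x (f + g) ≤ x f + x g)

/-- The hybrid norm on `ℂ`: the maximum of the Archimedean and the trivial absolute value. -/
noncomputable def hybridNorm (a : ℂ) : ℝ := if a = 0 then 0 else max ‖a‖ 1

/-- The Laurent polynomial ring `ℂ[z₁^{±1},…,z_n^{±1}]`. -/
abbrev LaurentAlg (n : ℕ) := AddMonoidAlgebra ℂ (Fin n → ℤ)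

/-- The coordinate function `z i`. -/
noncomputable def zVar {n : ℕ} (i : Fin n) : LaurentAlg n :=
  AddMonoidAlgebra.single (Pi.single i 1) 1

/-- The hybrid analytification of the torus `𝔾_m^n`. -/
abbrev TorusHyb (n : ℕ) :=
  {x : LaurentAlg n → ℝ // IsMultSeminorm x ∧
    ∀ c : ℂ, x (algebraMap ℂ (LaurentAlg n) c) ≤ hybridNorm c}

/-- The map `Trop = λ × trop : T^An → ℝ × ℝⁿ`. -/
noncomputable def TropMap (n : ℕ) (x : TorusHyb n) : ℝ × (Fin n → ℝ) :=
  (Real.log (x.1 (algebraMap ℂ (LaurentAlg n) ((Real.exp 1 : ℝ) : ℂ))),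
    fun i => -Real.log (x.1 (zVar i)))

/-!
Monomials are units of the Laurent polynomial ring, so every `x ∈ T^An` is positive on them, and
multiplicativity forces `x(z^m) = exp (-⟪m, trop x⟫)`. Together with subadditivity and
`x(c) ≤ ‖c‖`, this bounds `x f` on `{x | ‖trop x‖ ≤ R}` by a constant depending only on `f` and
`R`, so that set is a closed subset of a product of compact intervals (Tychonoff). This gives
properness, and a proper map to the locally compact space `ℝ × ℝⁿ` is closed.

For surjectivity, a point over `(t, r)` with `t > 0` is `f ↦ |f(e^{-r/t})|^t`, and a point over
`(0, r)` is `f ↦ exp (-ord f(T^r))`, where `f(T^r)` is the Hahn series obtained by substituting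
`z_i ↦ T^{r_i}`.
-/

namespace IsMultSeminorm

variable {A : Type*} [CommRing A] {x : A → ℝ}

theorem apply_mul_apply_eq_one (hx : IsMultSeminorm x) {u v : A} (huv : u * v = 1) :
    x u * x v = 1 := by
  obtain ⟨-, -, hx1, hmul, -⟩ := hx
  rw [← hmul, huv, hx1]

theorem apply_pos_of_mul_eq_one (hx : IsMultSeminorm x) {u v : A} (huv : u * v = 1) :
    0 < x u :=
  (hx.1 u).lt_of_ne fun h => by simpa [← h] using hx.apply_mul_apply_eq_one huv

theorem comp {B : Type*} [CommRing B] {x : B → ℝ} (hx : IsMultSeminorm x) (φ : A →+* B) :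
    IsMultSeminorm (x ∘ φ) := by
  obtain ⟨hnonneg, hx0, hx1, hmul, hadd⟩ := hx
  exact ⟨fun f => hnonneg _, by simp [hx0], by simp [hx1], fun f g => by simp [hmul],
    fun f g => by simpa using hadd _ _⟩

end IsMultSeminorm

theorem isClosed_setOf_isMultSeminorm (A : Type*) [CommRing A] :
    IsClosed {x : A → ℝ | IsMultSeminorm x} := by
  simp only [IsMultSeminorm, Set.ofPred_and]
  refine .inter ?_ <| .inter (isClosed_setOfPred_map_zero A ℝ) <|
    .inter (isClosed_setOfPred_map_one A ℝ) <| .inter (isClosed_setOfPred_map_mul A ℝ) ?_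
  · simp only [Set.ofPred_forall]
    exact isClosed_iInter fun f => isClosed_le continuous_const (continuous_apply f)
  · simp only [Set.ofPred_forall]
    exact isClosed_iInter fun f => isClosed_iInter fun g =>
      isClosed_le (continuous_apply _) (by fun_prop)

theorem isMultSeminorm_norm_rpow (K : Type*) [NormedField K] {t : ℝ} (ht₀ : 0 < t) (ht₁ : t ≤ 1) :
    IsMultSeminorm fun a : K => ‖a‖ ^ t := by
  refine ⟨fun a => by positivity, by simp [Real.zero_rpow ht₀.ne'], by simp,
    fun a b => by simp [Real.mul_rpow], fun a b => ?_⟩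
  calc ‖a + b‖ ^ t ≤ (‖a‖ + ‖b‖) ^ t := by gcongr; exact norm_add_le a b
    _ ≤ ‖a‖ ^ t + ‖b‖ ^ t := Real.rpow_add_le_add_rpow (norm_nonneg a) (norm_nonneg b) ht₀.le ht₁

namespace HahnSeries

open Classical in
noncomputable def expNegOrder {R : Type*} [Zero R] (a : HahnSeries ℝ R) : ℝ :=
  if a = 0 then 0 else Real.exp (-a.order)

theorem expNegOrder_single {R : Type*} [Zero R] (g : ℝ) {r : R} (hr : r ≠ 0) :
    expNegOrder (single g r) = Real.exp (-g) := by
  rw [expNegOrder, if_neg (single_ne_zero hr), order_single hr]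

theorem isMultSeminorm_expNegOrder (R : Type*) [CommRing R] [IsDomain R] :
    IsMultSeminorm (expNegOrder (R := R)) := by
  have hnonneg (a : HahnSeries ℝ R) : 0 ≤ expNegOrder a := by
    unfold expNegOrder; split_ifs <;> positivity
  refine ⟨hnonneg, by simp [expNegOrder], by simp [expNegOrder], fun a b => ?_, fun a b => ?_⟩
  · rcases eq_or_ne a 0 with rfl | ha
    · simp [expNegOrder]
    rcases eq_or_ne b 0 with rfl | hb
    · simp [expNegOrder]
    simp only [expNegOrder, if_neg ha, if_neg hb, if_neg (mul_ne_zero ha hb), order_mul ha hb,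
      neg_add, Real.exp_add]
  · rcases eq_or_ne (a + b) 0 with hab | hab
    · rw [hab]
      simpa [expNegOrder] using add_nonneg (hnonneg a) (hnonneg b)
    rcases eq_or_ne a 0 with rfl | ha
    · rw [zero_add]
      exact le_add_of_nonneg_left (hnonneg 0)
    rcases eq_or_ne b 0 with rfl | hb
    · rw [add_zero]
      exact le_add_of_nonneg_right (hnonneg 0)
    have hmin := min_order_le_order_add hab
    simp only [expNegOrder, if_neg ha, if_neg hb, if_neg hab]
    rcases min_choice a.order b.order with h | h <;> rw [h] at hmin
    · linarith [Real.exp_le_exp.2 (neg_le_neg hmin), Real.exp_pos (-b.order)]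
    · linarith [Real.exp_le_exp.2 (neg_le_neg hmin), Real.exp_pos (-a.order)]

end HahnSeries

theorem hybridNorm_nonneg (c : ℂ) : 0 ≤ hybridNorm c := by
  unfold hybridNorm; split_ifs <;> positivity

theorem one_le_hybridNorm {c : ℂ} (hc : c ≠ 0) : 1 ≤ hybridNorm c := by
  simp [hybridNorm, hc]

theorem hybridNorm_of_one_le_norm {c : ℂ} (hc : 1 ≤ ‖c‖) : hybridNorm c = ‖c‖ := by
  rw [hybridNorm, if_neg (norm_pos_iff.1 (one_pos.trans_le hc)), max_eq_left hc]

theorem hybridNorm_of_norm_le_one {c : ℂ} (hc₀ : c ≠ 0) (hc : ‖c‖ ≤ 1) : hybridNorm c = 1 := by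
  rw [hybridNorm, if_neg hc₀, max_eq_right hc]

theorem norm_rpow_le_hybridNorm (c : ℂ) {t : ℝ} (ht₀ : 0 < t) (ht₁ : t ≤ 1) :
    ‖c‖ ^ t ≤ hybridNorm c := by
  rcases eq_or_ne c 0 with rfl | hc
  · simp [hybridNorm, Real.zero_rpow ht₀.ne']
  rcases le_total 1 ‖c‖ with h | h
  · rw [hybridNorm_of_one_le_norm h]
    exact Real.rpow_le_self_of_one_le h ht₁
  · rw [hybridNorm_of_norm_le_one hc h]
    exact Real.rpow_le_one (norm_nonneg c) h ht₀.le

namespace LaurentAlg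

variable {n : ℕ}

noncomputable def expEval (w : Fin n → ℝ) : LaurentAlg n →ₐ[ℂ] ℂ :=
  AddMonoidAlgebra.lift ℂ ℂ (Fin n → ℤ)
    { toFun m := Complex.exp (∑ i, (w i : ℂ) * (m.toAdd i : ℂ))
      map_one' := by simp
      map_mul' a b := by simp [mul_add, Finset.sum_add_distrib, Complex.exp_add] }

noncomputable def hahnEval (r : Fin n → ℝ) : LaurentAlg n →ₐ[ℂ] HahnSeries ℝ ℂ :=
  AddMonoidAlgebra.lift ℂ (HahnSeries ℝ ℂ) (Fin n → ℤ)
    { toFun m := HahnSeries.single (∑ i, r i * (m.toAdd i : ℝ)) 1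
      map_one' := by simp
      map_mul' a b := by
        simp [HahnSeries.single_mul_single, mul_add, Finset.sum_add_distrib] }

theorem expEval_zVar (w : Fin n → ℝ) (i : Fin n) : expEval w (zVar i) = Complex.exp (w i) := by
  simp [expEval, zVar, AddMonoidAlgebra.lift_single, Pi.single_apply]

theorem hahnEval_zVar (r : Fin n → ℝ) (i : Fin n) :
    hahnEval r (zVar i) = HahnSeries.single (r i) 1 := by
  simp [hahnEval, zVar, AddMonoidAlgebra.lift_single, Pi.single_apply, Algebra.smul_def]

-- `Algebra ℂ ℂ⟦ℝ⟧` is found through `HahnSeries.powerSeriesAlgebra`, hence the detour via `ℂ⟦X⟧`.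
theorem hahnEval_algebraMap (r : Fin n → ℝ) (c : ℂ) :
    hahnEval r (algebraMap ℂ (LaurentAlg n) c) = HahnSeries.single 0 c := by
  rw [AlgHom.commutes, HahnSeries.algebraMap_apply', PowerSeries.algebraMap_apply,
    HahnSeries.ofPowerSeries_C]
  rfl

end LaurentAlg

namespace TorusHyb

variable {n : ℕ}

open LaurentAlg

theorem apply_single_one_pos (x : TorusHyb n) (m : Fin n → ℤ) :
    0 < x.1 (AddMonoidAlgebra.single m 1) :=
  x.2.1.apply_pos_of_mul_eq_one (v := AddMonoidAlgebra.single (-m) 1) <| by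
    rw [AddMonoidAlgebra.single_mul_single, add_neg_cancel, one_mul]
    rfl

theorem apply_zVar_pos (x : TorusHyb n) (i : Fin n) : 0 < x.1 (zVar i) :=
  x.apply_single_one_pos _

theorem apply_exp_one_mem_Icc (x : TorusHyb n) :
    x.1 (algebraMap ℂ (LaurentAlg n) ((Real.exp 1 : ℝ) : ℂ)) ∈ Set.Icc 1 (Real.exp 1) := by
  have he : 1 ≤ ‖((Real.exp 1 : ℝ) : ℂ)‖ := by
    rw [Complex.norm_real, Real.norm_of_nonneg (Real.exp_nonneg 1)]
    exact Real.one_le_exp zero_le_one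
  have he₀ : ((Real.exp 1 : ℝ) : ℂ) ≠ 0 := norm_pos_iff.1 (one_pos.trans_le he)
  have hinv_le : x.1 (algebraMap ℂ (LaurentAlg n) ((Real.exp 1 : ℝ) : ℂ)⁻¹) ≤ 1 :=
    (x.2.2 _).trans_eq <| hybridNorm_of_norm_le_one (inv_ne_zero he₀) <| by
      rw [norm_inv]; exact inv_le_one_of_one_le₀ he
  have hmul := x.2.1.apply_mul_apply_eq_one (u := algebraMap ℂ (LaurentAlg n) _)
    (v := algebraMap ℂ (LaurentAlg n) ((Real.exp 1 : ℝ) : ℂ)⁻¹) <| by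
      rw [← map_mul, mul_inv_cancel₀ he₀, map_one]
  refine ⟨?_, (x.2.2 _).trans_eq ?_⟩
  · linarith [mul_le_mul_of_nonneg_left hinv_le
      (x.2.1.1 (algebraMap ℂ (LaurentAlg n) ((Real.exp 1 : ℝ) : ℂ)))]
  · rw [hybridNorm_of_one_le_norm he, Complex.norm_real, Real.norm_of_nonneg (Real.exp_nonneg 1)]

theorem log_apply_exp_one_mem_Icc (x : TorusHyb n) :
    Real.log (x.1 (algebraMap ℂ (LaurentAlg n) ((Real.exp 1 : ℝ) : ℂ))) ∈ Set.Icc 0 1 := by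
  obtain ⟨h1, he⟩ := x.apply_exp_one_mem_Icc
  exact ⟨Real.log_nonneg h1, (Real.log_le_log (one_pos.trans_le h1) he).trans_eq (Real.log_exp 1)⟩

theorem continuous_tropMap : Continuous (TropMap n) := by
  have hcont (f : LaurentAlg n) : Continuous fun x : TorusHyb n => x.1 f :=
    (continuous_apply f).comp continuous_subtype_val
  exact ((hcont _).log fun x => (one_pos.trans_le x.apply_exp_one_mem_Icc.1).ne').prodMk <|
    continuous_pi fun i => ((hcont _).log fun x => (x.apply_zVar_pos i).ne').neg

theorem tropMap_eq_of_apply_eq_exp (x : TorusHyb n) {t : ℝ} {r : Fin n → ℝ}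
    (ht : x.1 (algebraMap ℂ (LaurentAlg n) ((Real.exp 1 : ℝ) : ℂ)) = Real.exp t)
    (hr : ∀ i, x.1 (zVar i) = Real.exp (-r i)) : TropMap n x = (t, r) := by
  simp only [TropMap, ht, hr, Real.log_exp, neg_neg]

theorem apply_single_one_eq_exp (x : TorusHyb n) (m : Fin n → ℤ) :
    x.1 (AddMonoidAlgebra.single m 1) = Real.exp (-∑ i, m i * (TropMap n x).2 i) := by
  obtain ⟨⟨-, -, -, hmul, -⟩, -⟩ := x.2
  let L : (Fin n → ℤ) →+ ℝ :=
    AddMonoidHom.mk' (fun m => Real.log (x.1 (AddMonoidAlgebra.single m 1))) fun a b => by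
      rw [← Real.log_mul (x.apply_single_one_pos a).ne' (x.apply_single_one_pos b).ne',
        ← hmul, AddMonoidAlgebra.single_mul_single, one_mul]
  have hL : L m = ∑ i, m i * L (Pi.single i 1) := by
    conv_lhs => rw [← Finset.univ_sum_single m]
    rw [map_sum]
    refine Finset.sum_congr rfl fun i _ => ?_
    rw [← zsmul_eq_mul, ← map_zsmul, ← Pi.single_smul, smul_eq_mul, mul_one]
  rw [← Real.exp_log (x.apply_single_one_pos m)]
  change Real.exp (L m) = _
  simp [hL, TropMap, zVar, L]

theorem apply_single_one_le (x : TorusHyb n) {R : ℝ} (hR : ‖(TropMap n x).2‖ ≤ R)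
    (m : Fin n → ℤ) : x.1 (AddMonoidAlgebra.single m 1) ≤ Real.exp (R * ∑ i, |(m i : ℝ)|) := by
  rw [apply_single_one_eq_exp, Finset.mul_sum, ← Finset.sum_neg_distrib]
  gcongr with i
  calc -(m i * (TropMap n x).2 i) ≤ |(m i : ℝ)| * |(TropMap n x).2 i| := by
        rw [← abs_mul]; exact neg_le_abs _
    _ ≤ |(m i : ℝ)| * R := by
        gcongr
        exact (norm_le_pi_norm (TropMap n x).2 i).trans hR
    _ = R * |(m i : ℝ)| := mul_comm _ _

theorem apply_le_of_norm_trop_le (x : TorusHyb n) {R : ℝ} (hR : ‖(TropMap n x).2‖ ≤ R)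
    (f : LaurentAlg n) :
    x.1 f ≤ ∑ m ∈ f.coeff.support, hybridNorm (f.coeff m) * Real.exp (R * ∑ i, |(m i : ℝ)|) := by
  obtain ⟨⟨hnonneg, h0, -, hmul, hadd⟩, hbound⟩ := x.2
  conv_lhs => rw [← AddMonoidAlgebra.sum_coeff_single f]
  refine (Finset.le_sum_of_subadditive x.1 h0.le hadd _ _).trans <|
    Finset.sum_le_sum fun m _ => ?_
  have hsplit : AddMonoidAlgebra.single m (f.coeff m) =
      algebraMap ℂ (LaurentAlg n) (f.coeff m) * AddMonoidAlgebra.single m 1 := by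
    simp [AddMonoidAlgebra.single_mul_single]
  rw [hsplit, hmul]
  exact mul_le_mul (hbound _) (x.apply_single_one_le hR m) (hnonneg _) (hybridNorm_nonneg _)

theorem isClosedEmbedding_val :
    Topology.IsClosedEmbedding (Subtype.val : TorusHyb n → LaurentAlg n → ℝ) := by
  have hclosed : IsClosed {x : LaurentAlg n → ℝ | IsMultSeminorm x ∧
      ∀ c : ℂ, x (algebraMap ℂ (LaurentAlg n) c) ≤ hybridNorm c} := by
    rw [Set.ofPred_and, Set.ofPred_forall]
    exact (isClosed_setOf_isMultSeminorm _).inter <|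
      isClosed_iInter fun c => isClosed_le (continuous_apply _) continuous_const
  exact hclosed.isClosedEmbedding_subtypeVal

theorem isCompact_setOf_norm_trop_le (R : ℝ) :
    IsCompact {x : TorusHyb n | ‖(TropMap n x).2‖ ≤ R} := by
  refine (isClosedEmbedding_val.isCompact_preimage (isCompact_univ_pi fun f => isCompact_Icc
    (a := 0) (b := ∑ m ∈ f.coeff.support, hybridNorm (f.coeff m) *
      Real.exp (R * ∑ i, |(m i : ℝ)|)))).of_isClosed_subset
    (isClosed_le (continuous_snd.comp continuous_tropMap).norm continuous_const) fun x hx => ?_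
  exact Set.mem_univ_pi.2 fun f => ⟨x.2.1.1 f, apply_le_of_norm_trop_le x hx f⟩

theorem isProperMap_tropMap : IsProperMap (TropMap n) := by
  refine isProperMap_iff_isCompact_preimage.2 ⟨continuous_tropMap, fun K hK => ?_⟩
  obtain ⟨R, hR⟩ := hK.isBounded.subset_closedBall 0
  refine (isCompact_setOf_norm_trop_le R).of_isClosed_subset
    (hK.isClosed.preimage continuous_tropMap) fun x hx => ?_
  exact (norm_snd_le _).trans (mem_closedBall_zero_iff.1 (hR hx))

noncomputable def ofNormRpow {t : ℝ} (ht₀ : 0 < t) (ht₁ : t ≤ 1) (w : Fin n → ℝ) :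
    TorusHyb n :=
  ⟨(fun a : ℂ => ‖a‖ ^ t) ∘ expEval w, (isMultSeminorm_norm_rpow ℂ ht₀ ht₁).comp _,
    fun c => by
      change ‖expEval w (algebraMap ℂ (LaurentAlg n) c)‖ ^ t ≤ _
      rw [AlgHom.commutes, Algebra.algebraMap_self, RingHom.id_apply]
      exact norm_rpow_le_hybridNorm c ht₀ ht₁⟩

noncomputable def ofExpNegOrder (r : Fin n → ℝ) : TorusHyb n :=
  ⟨HahnSeries.expNegOrder ∘ hahnEval r, (HahnSeries.isMultSeminorm_expNegOrder ℂ).comp _,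
    fun c => by
      change HahnSeries.expNegOrder (hahnEval r (algebraMap ℂ (LaurentAlg n) c)) ≤ _
      rw [hahnEval_algebraMap]
      rcases eq_or_ne c 0 with rfl | hc
      · simp [HahnSeries.expNegOrder, hybridNorm]
      · simpa [HahnSeries.expNegOrder_single 0 hc] using one_le_hybridNorm hc⟩

theorem tropMap_ofNormRpow {t : ℝ} (ht₀ : 0 < t) (ht₁ : t ≤ 1) (r : Fin n → ℝ) :
    TropMap n (ofNormRpow ht₀ ht₁ fun i => -r i / t) = (t, r) := by
  refine tropMap_eq_of_apply_eq_exp _ ?_ fun i => ?_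
  · change ‖expEval _ (algebraMap ℂ (LaurentAlg n) _)‖ ^ t = _
    rw [AlgHom.commutes, Algebra.algebraMap_self, RingHom.id_apply, Complex.norm_real,
      Real.norm_of_nonneg (Real.exp_nonneg 1), Real.exp_one_rpow]
  · change ‖expEval _ (zVar i)‖ ^ t = _
    rw [expEval_zVar, Complex.norm_exp_ofReal, ← Real.exp_mul, div_mul_cancel₀ _ ht₀.ne']

theorem tropMap_ofExpNegOrder (r : Fin n → ℝ) : TropMap n (ofExpNegOrder r) = (0, r) := by
  refine tropMap_eq_of_apply_eq_exp _ ?_ fun i => ?_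
  · change HahnSeries.expNegOrder (hahnEval r (algebraMap ℂ (LaurentAlg n) _)) = _
    rw [hahnEval_algebraMap, HahnSeries.expNegOrder_single 0 (by simp), neg_zero]
  · change HahnSeries.expNegOrder (hahnEval r (zVar i)) = _
    rw [hahnEval_zVar, HahnSeries.expNegOrder_single _ one_ne_zero]

theorem range_tropMap :
    Set.range (TropMap n) = Set.Icc (0 : ℝ) 1 ×ˢ (Set.univ : Set (Fin n → ℝ)) := by
  refine Set.Subset.antisymm
    (Set.range_subset_iff.2 fun x => ⟨x.log_apply_exp_one_mem_Icc, trivial⟩) ?_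
  rintro ⟨t, r⟩ ⟨⟨ht₀, ht₁⟩, -⟩
  rcases ht₀.eq_or_lt with rfl | ht₀
  · exact ⟨_, tropMap_ofExpNegOrder r⟩
  · exact ⟨_, tropMap_ofNormRpow ht₀ ht₁ r⟩

end TorusHyb

theorem tropMap_continuous_proper_surjective_closed_general (n : ℕ) :
    (∀ x : TorusHyb n, ∀ i : Fin n, 0 < x.1 (zVar i)) ∧
    (∀ x : TorusHyb n,
      Real.log (x.1 (algebraMap ℂ (LaurentAlg n) ((Real.exp 1 : ℝ) : ℂ))) ∈
        Set.Icc (0 : ℝ) 1) ∧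
    Continuous (TropMap n) ∧
    Set.range (TropMap n) = Set.Icc (0 : ℝ) 1 ×ˢ (Set.univ : Set (Fin n → ℝ)) ∧
    (∀ K : Set (ℝ × (Fin n → ℝ)), IsCompact K → IsCompact (TropMap n ⁻¹' K)) ∧
    (∀ C : Set (TorusHyb n), IsClosed C →
      ∃ D : Set (ℝ × (Fin n → ℝ)), IsClosed D ∧
        TropMap n '' C = D ∩ (Set.Icc (0 : ℝ) 1 ×ˢ (Set.univ : Set (Fin n → ℝ)))) := by
  refine ⟨TorusHyb.apply_zVar_pos, TorusHyb.log_apply_exp_one_mem_Icc,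
    TorusHyb.continuous_tropMap, TorusHyb.range_tropMap,
    fun K hK => TorusHyb.isProperMap_tropMap.isCompact_preimage hK,
    fun C hC => ⟨TropMap n '' C, TorusHyb.isProperMap_tropMap.isClosedMap C hC, ?_⟩⟩
  exact (Set.inter_eq_self_of_subset_left <|
    (Set.image_subset_range _ C).trans TorusHyb.range_tropMap.le).symm

/-- Proposition 2.1 for the torus: `Trop` is well defined (`x(z_i) > 0`, `λ(x) ∈ [0,1]`),
continuous, surjective onto `[0,1] × ℝⁿ`, proper, and (consequently) closed as a map
onto `[0,1] × ℝⁿ`. -/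
theorem tropMap_continuous_proper_surjective_closed (n : ℕ) (hn : 1 ≤ n) :
    (∀ x : TorusHyb n, ∀ i : Fin n, 0 < x.1 (zVar i)) ∧
    (∀ x : TorusHyb n,
      Real.log (x.1 (algebraMap ℂ (LaurentAlg n) ((Real.exp 1 : ℝ) : ℂ))) ∈
        Set.Icc (0 : ℝ) 1) ∧
    Continuous (TropMap n) ∧
    Set.range (TropMap n) = Set.Icc (0 : ℝ) 1 ×ˢ (Set.univ : Set (Fin n → ℝ)) ∧
    (∀ K : Set (ℝ × (Fin n → ℝ)), IsCompact K → IsCompact (TropMap n ⁻¹' K)) ∧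
    (∀ C : Set (TorusHyb n), IsClosed C →
      ∃ D : Set (ℝ × (Fin n → ℝ)), IsClosed D ∧
        TropMap n '' C = D ∩ (Set.Icc (0 : ℝ) 1 ×ˢ (Set.univ : Set (Fin n → ℝ)))) :=
  tropMap_continuous_proper_surjective_closed_general n
end

section
/- Let A be a finitely generated commutative ℂ-algebra, let ρ ∈ (0,1], and let x be a multiplicative seminorm on A such that x(c·1_A) = |c|^ρ for all c ∈ ℂ. Then there exists a unique ℂ-algebra homomorphism φ : A → ℂ such that x(f) = |φ(f)|^ρ for all f ∈ A. -/
/-!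
For `f : A`, the function `c ↦ x (f - c)` on `ℂ` is continuous and tends to infinity, so it
attains a minimum `m` at some `c`. If `m > 0`, factoring `(f - c) ^ n - ε ^ n` over the `n`-th
roots of unity and letting `n → ∞` gives `x (f - c - ε) ≤ m` whenever `‖ε‖ ^ ρ < m`; so the set
where the minimum is attained is open and closed, i.e. all of `ℂ`, which is absurd. Hence every
`f` is congruent to a scalar modulo the (proper) kernel ideal of `x`, so that `A ⧸ ker x ≅ ℂ`;
this gives `φ`, and `x` is constant on cosets of its kernel. Any `ψ` with `x = ‖ψ‖ ^ ρ` kills the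
kernel, which forces `ψ = φ`.
-/

open Filter Topology Polynomial

theorem le_of_forall_mul_pow_le_pow_add_pow {a m t : ℝ} (ht : 0 ≤ t) (htm : t < m)
    (h : ∀ k : ℕ, a * m ^ k ≤ m ^ (k + 1) + t ^ (k + 1)) : a ≤ m := by
  have hm : 0 < m := ht.trans_lt htm
  have hbound : ∀ k : ℕ, a ≤ m + t * (t / m) ^ k := fun k => by
    have hmk : 0 < m ^ k := pow_pos hm k
    have : m + t * (t / m) ^ k = (m ^ (k + 1) + t ^ (k + 1)) / m ^ k := by
      rw [eq_div_iff hmk.ne', add_mul, mul_assoc, div_pow, div_mul_cancel₀ _ hmk.ne']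
      ring
    rw [this, le_div_iff₀ hmk]
    exact h k
  have hlim : Tendsto (fun k : ℕ => m + t * (t / m) ^ k) atTop (𝓝 (m + t * 0)) :=
    tendsto_const_nhds.add (tendsto_const_nhds.mul
      (tendsto_pow_atTop_nhds_zero_of_lt_one (div_nonneg ht hm.le) ((div_lt_one hm).2 htm)))
  simpa using ge_of_tendsto' hlim hbound

theorem IsPrimitiveRoot.prod_range_sub_algebraMap {K A : Type*} [Field K] [CommRing A]
    [Algebra K A] {ζ : K} {n : ℕ} (hζ : IsPrimitiveRoot ζ n) (hn : 0 < n) (b : A) (ε : K) :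
    ∏ i ∈ Finset.range n, (b - algebraMap K A (ζ ^ i * ε)) = b ^ n - algebraMap K A (ε ^ n) := by
  simpa only [map_sub, map_pow, map_prod, aeval_X, aeval_C] using
    (congrArg (aeval b) (X_pow_sub_C_eq_prod hζ hn rfl)).symm

namespace Ideal

variable {K A : Type*} [Field K] [CommRing A] [Algebra K A] {I : Ideal A}

theorem eq_of_sub_algebraMap_mem (hI : I ≠ ⊤) {f : A} {a b : K}
    (ha : f - algebraMap K A a ∈ I) (hb : f - algebraMap K A b ∈ I) : a = b := by
  by_contra hab
  have hmem : algebraMap K A (b - a) ∈ I := by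
    simpa only [map_sub, sub_sub_sub_cancel_left] using I.sub_mem ha hb
  exact hI (I.eq_top_of_isUnit_mem hmem ((sub_ne_zero.2 (Ne.symm hab)).isUnit.map _))

theorem exists_algHom_sub_algebraMap_mem (hI : I ≠ ⊤)
    (h : ∀ f : A, ∃ c : K, f - algebraMap K A c ∈ I) :
    ∃ φ : A →ₐ[K] K, ∀ f, f - algebraMap K A (φ f) ∈ I := by
  have : Nontrivial (A ⧸ I) := Quotient.nontrivial_iff.2 hI
  have hsurj : Function.Surjective (Algebra.ofId K (A ⧸ I)) := by
    rintro ⟨f⟩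
    obtain ⟨c, hc⟩ := h f
    exact ⟨c, (Quotient.eq.2 hc).symm⟩
  let e := AlgEquiv.ofBijective (Algebra.ofId K (A ⧸ I)) ⟨(algebraMap K (A ⧸ I)).injective, hsurj⟩
  refine ⟨e.symm.toAlgHom.comp (Quotient.mkₐ K I), fun f => Quotient.eq.1 ?_⟩
  exact (e.apply_symm_apply (Quotient.mk I f)).symm

end Ideal

namespace IsMultSeminorm

variable {A : Type*} [CommRing A] {x : A → ℝ}

theorem nonneg (hx : IsMultSeminorm x) (f : A) : 0 ≤ x f := hx.1 f

theorem map_zero (hx : IsMultSeminorm x) : x 0 = 0 := hx.2.1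

theorem map_one (hx : IsMultSeminorm x) : x 1 = 1 := hx.2.2.1

theorem map_mul (hx : IsMultSeminorm x) (f g : A) : x (f * g) = x f * x g := hx.2.2.2.1 f g

theorem map_add_le (hx : IsMultSeminorm x) (f g : A) : x (f + g) ≤ x f + x g := hx.2.2.2.2 f g

theorem map_pow (hx : IsMultSeminorm x) (f : A) (n : ℕ) : x (f ^ n) = x f ^ n := by
  induction n with
  | zero => simp [hx.map_one]
  | succ n ih => rw [pow_succ, pow_succ, hx.map_mul, ih]

theorem map_prod (hx : IsMultSeminorm x) {ι : Type*} (s : Finset ι) (g : ι → A) :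
    x (∏ i ∈ s, g i) = ∏ i ∈ s, x (g i) := by
  classical
  induction s using Finset.induction with
  | empty => simp [hx.map_one]
  | insert i s hi ih => rw [Finset.prod_insert hi, Finset.prod_insert hi, hx.map_mul, ih]

theorem map_neg (hx : IsMultSeminorm x) (f : A) : x (-f) = x f := by
  have h : x (-1) ^ 2 = 1 := by rw [← hx.map_pow, neg_one_sq, hx.map_one]
  rw [neg_eq_neg_one_mul, hx.map_mul, (pow_eq_one_iff_of_nonneg (hx.nonneg _) two_ne_zero).1 h,
    one_mul]

theorem map_sub_comm (hx : IsMultSeminorm x) (f g : A) : x (f - g) = x (g - f) := by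
  rw [← neg_sub, hx.map_neg]

theorem abs_sub_le_map_sub (hx : IsMultSeminorm x) (f g : A) : |x f - x g| ≤ x (f - g) := by
  have hf := hx.map_add_le (f - g) g
  have hg := hx.map_add_le (g - f) f
  rw [sub_add_cancel] at hf hg
  rw [hx.map_sub_comm g f] at hg
  rw [abs_sub_le_iff]
  constructor <;> linarith

def ker (hx : IsMultSeminorm x) : Ideal A where
  carrier := {f | x f = 0}
  zero_mem' := hx.map_zero
  add_mem' {f g} (hf : x f = 0) (hg : x g = 0) :=
    le_antisymm ((hx.map_add_le f g).trans_eq (by rw [hf, hg, add_zero])) (hx.nonneg _)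
  smul_mem' c f (hf : x f = 0) := show x (c * f) = 0 by rw [hx.map_mul, hf, mul_zero]

theorem mem_ker (hx : IsMultSeminorm x) {f : A} : f ∈ hx.ker ↔ x f = 0 := Iff.rfl

theorem ker_ne_top (hx : IsMultSeminorm x) : hx.ker ≠ ⊤ :=
  (Ideal.ne_top_iff_one _).2 (by simp [mem_ker, hx.map_one])

theorem map_eq_of_sub_mem_ker (hx : IsMultSeminorm x) {f g : A} (h : f - g ∈ hx.ker) :
    x f = x g :=
  sub_eq_zero.1 (abs_nonpos_iff.1 ((hx.abs_sub_le_map_sub f g).trans_eq h))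

section Complex

variable [Algebra ℂ A] {ρ : ℝ}

theorem continuous_map_sub_algebraMap (hx : IsMultSeminorm x) (hρ : 0 < ρ)
    (hres : ∀ c : ℂ, x (algebraMap ℂ A c) = ‖c‖ ^ ρ) (f : A) :
    Continuous fun c : ℂ => x (f - algebraMap ℂ A c) := by
  refine continuous_iff_continuousAt.2 fun c₀ => tendsto_iff_dist_tendsto_zero.2 <|
    squeeze_zero (g := fun c => ‖c₀ - c‖ ^ ρ) (fun _ => dist_nonneg) (fun c => ?_) ?_
  · calc dist (x (f - algebraMap ℂ A c)) (x (f - algebraMap ℂ A c₀))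
        ≤ x (f - algebraMap ℂ A c - (f - algebraMap ℂ A c₀)) := hx.abs_sub_le_map_sub _ _
      _ = ‖c₀ - c‖ ^ ρ := by rw [sub_sub_sub_cancel_left, ← map_sub, hres]
  · have hcont : Continuous fun c : ℂ => ‖c₀ - c‖ ^ ρ := by fun_prop (disch := exact hρ.le)
    simpa [Real.zero_rpow hρ.ne'] using hcont.tendsto c₀

theorem tendsto_map_sub_algebraMap_cocompact (hx : IsMultSeminorm x) (hρ : 0 < ρ)
    (hres : ∀ c : ℂ, x (algebraMap ℂ A c) = ‖c‖ ^ ρ) (f : A) :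
    Tendsto (fun c : ℂ => x (f - algebraMap ℂ A c)) (cocompact ℂ) atTop := by
  refine tendsto_atTop_mono (fun c => ?_) <| tendsto_atTop_add_const_right _ (-x f) <|
    (tendsto_rpow_atTop hρ).comp tendsto_norm_cocompact_atTop
  have := (le_abs_self _).trans (hx.abs_sub_le_map_sub (algebraMap ℂ A c) f)
  rw [hres, hx.map_sub_comm] at this
  simp only [Function.comp_apply]
  linarith

/-- Of the `k + 1` factors `f - (c + ζ ^ i * ε)` of `(f - c) ^ (k + 1) - ε ^ (k + 1)`, all but
the one with `i = 0` have `x`-value at least the minimum `m`. -/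
theorem map_sub_algebraMap_add_mul_pow_le (hx : IsMultSeminorm x)
    (hres : ∀ c : ℂ, x (algebraMap ℂ A c) = ‖c‖ ^ ρ) {f : A} {c : ℂ} {m : ℝ}
    (hmin : ∀ c', m ≤ x (f - algebraMap ℂ A c')) (hc : x (f - algebraMap ℂ A c) = m)
    (ε : ℂ) (k : ℕ) :
    x (f - algebraMap ℂ A (c + ε)) * m ^ k ≤ m ^ (k + 1) + (‖ε‖ ^ ρ) ^ (k + 1) := by
  obtain ⟨ζ, hζ⟩ : ∃ ζ : ℂ, IsPrimitiveRoot ζ (k + 1) :=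
    ⟨_, Complex.isPrimitiveRoot_exp _ k.succ_ne_zero⟩
  set b := f - algebraMap ℂ A c
  have hterm : ∀ ξ : ℂ, b - algebraMap ℂ A (ξ * ε) = f - algebraMap ℂ A (c + ξ * ε) :=
    fun ξ => by rw [map_add]; ring
  have hprod : x (b ^ (k + 1) - algebraMap ℂ A (ε ^ (k + 1))) = x (f - algebraMap ℂ A (c + ε)) *
      ∏ i ∈ Finset.range k, x (f - algebraMap ℂ A (c + ζ ^ (i + 1) * ε)) := by
    rw [← hζ.prod_range_sub_algebraMap k.succ_pos, hx.map_prod, Finset.prod_range_succ', mul_comm]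
    simp_rw [hterm, pow_zero, one_mul]
  have hlow : m ^ k ≤ ∏ i ∈ Finset.range k, x (f - algebraMap ℂ A (c + ζ ^ (i + 1) * ε)) := by
    calc m ^ k = ∏ _i ∈ Finset.range k, m := by rw [Finset.prod_const, Finset.card_range]
      _ ≤ _ := Finset.prod_le_prod (fun _ _ => hc ▸ hx.nonneg _) fun _ _ => hmin _
  calc x (f - algebraMap ℂ A (c + ε)) * m ^ k
      ≤ x (b ^ (k + 1) - algebraMap ℂ A (ε ^ (k + 1))) :=
        hprod ▸ mul_le_mul_of_nonneg_left hlow (hx.nonneg _)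
    _ ≤ x (b ^ (k + 1)) + x (algebraMap ℂ A (ε ^ (k + 1))) := by
        rw [sub_eq_add_neg, ← hx.map_neg (algebraMap ℂ A _)]; exact hx.map_add_le _ _
    _ = m ^ (k + 1) + (‖ε‖ ^ ρ) ^ (k + 1) := by
        rw [hx.map_pow, hc, hres, norm_pow, Real.rpow_pow_comm (norm_nonneg _)]

theorem isOpen_setOf_map_sub_algebraMap_eq (hx : IsMultSeminorm x) (hρ : 0 < ρ)
    (hres : ∀ c : ℂ, x (algebraMap ℂ A c) = ‖c‖ ^ ρ) {f : A} {m : ℝ} (hm : 0 < m)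
    (hmin : ∀ c, m ≤ x (f - algebraMap ℂ A c)) :
    IsOpen {c : ℂ | x (f - algebraMap ℂ A c) = m} := by
  refine Metric.isOpen_iff.2 fun c (hc : _ = m) =>
    ⟨m ^ ρ⁻¹, Real.rpow_pos_of_pos hm _, fun c' hc' => le_antisymm ?_ (hmin c')⟩
  rw [Metric.mem_ball, dist_eq_norm, Real.lt_rpow_inv_iff_of_pos (norm_nonneg _) hm.le hρ] at hc'
  have hest := hx.map_sub_algebraMap_add_mul_pow_le hres hmin hc (c' - c)
  rw [add_sub_cancel] at hest
  exact le_of_forall_mul_pow_le_pow_add_pow (by positivity) hc' hest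

theorem exists_sub_algebraMap_mem_ker (hx : IsMultSeminorm x) (hρ : 0 < ρ)
    (hres : ∀ c : ℂ, x (algebraMap ℂ A c) = ‖c‖ ^ ρ) (f : A) :
    ∃ c : ℂ, f - algebraMap ℂ A c ∈ hx.ker := by
  have hcont := hx.continuous_map_sub_algebraMap hρ hres f
  have htends := hx.tendsto_map_sub_algebraMap_cocompact hρ hres f
  obtain ⟨c₀, hmin⟩ := hcont.exists_forall_le htends
  refine ⟨c₀, (hx.nonneg _).eq_or_lt.elim Eq.symm fun hm => absurd htends ?_⟩
  -- a positive minimum would be attained on a nonempty clopen set, hence everywhere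
  have hS : {c | x (f - algebraMap ℂ A c) = x (f - algebraMap ℂ A c₀)} = Set.univ :=
    IsClopen.eq_univ ⟨isClosed_eq hcont continuous_const,
      hx.isOpen_setOf_map_sub_algebraMap_eq hρ hres hm hmin⟩ ⟨c₀, rfl⟩
  rw [show (fun c => x (f - algebraMap ℂ A c)) = fun _ => x (f - algebraMap ℂ A c₀) from
    funext fun c => Set.eq_univ_iff_forall.1 hS c]
  exact not_tendsto_const_atTop _ _

end Complex

end IsMultSeminorm

theorem archimedean_fiber_is_closed_point_general
    (A : Type*) [CommRing A] [Algebra ℂ A]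
    (ρ : ℝ) (hρ : ρ ∈ Set.Ioc (0 : ℝ) 1)
    (x : A → ℝ) (hx : IsMultSeminorm x)
    (hres : ∀ c : ℂ, x (algebraMap ℂ A c) = ‖c‖ ^ ρ) :
    ∃! φ : A →ₐ[ℂ] ℂ, ∀ f : A, x f = ‖φ f‖ ^ ρ := by
  obtain ⟨φ, hφ⟩ := hx.ker.exists_algHom_sub_algebraMap_mem hx.ker_ne_top
    (hx.exists_sub_algebraMap_mem_ker hρ.1 hres)
  refine ⟨φ, fun f => by rw [hx.map_eq_of_sub_mem_ker (hφ f), hres], fun ψ hψ => ?_⟩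
  ext f
  refine hx.ker.eq_of_sub_algebraMap_mem hx.ker_ne_top ?_ (hφ f)
  rw [hx.mem_ker, hψ, map_sub, AlgHom.commutes, Algebra.algebraMap_self_apply, sub_self,
    norm_zero, Real.zero_rpow hρ.1.ne']

/-- Gelfand–Mazur identification of Archimedean fibers: a multiplicative seminorm on a
finitely generated ℂ-algebra restricting to `|·|^ρ` on `ℂ` (with `0 < ρ ≤ 1`) is of the
form `f ↦ |φ(f)|^ρ` for a unique ℂ-algebra homomorphism `φ : A → ℂ`. -/
theorem archimedean_fiber_is_closed_point
    (A : Type*) [CommRing A] [Algebra ℂ A] (hA : Algebra.FiniteType ℂ A)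
    (ρ : ℝ) (hρ : ρ ∈ Set.Ioc (0 : ℝ) 1)
    (x : A → ℝ) (hx : IsMultSeminorm x)
    (hres : ∀ c : ℂ, x (algebraMap ℂ A c) = ‖c‖ ^ ρ) :
    ∃! φ : A →ₐ[ℂ] ℂ, ∀ f : A, x f = ‖φ f‖ ^ ρ :=
  archimedean_fiber_is_closed_point_general A ρ hρ x hx hres
end

section
/- Let n ≥ 1, let α₁,…,α_n be positive real numbers that are linearly independent over ℚ, and let a : ℕⁿ → ℂ be a function that is not identically zero and satisfies |a_m| ≤ R^{|m|} for all m ∈ ℕⁿ, for some R ≥ 1, where |m| := m₁+⋯+m_n. Set v := min{⟨m,α⟩ : a_m ≠ 0}, where ⟨m,α⟩ := m₁α₁+⋯+m_nα_n. Then for all real numbers s, t with 0 ≤ s < e^{−v} < t there exists ε > 0 such that for every ρ ∈ (0,ε] and every η ∈ ℂⁿ with |η_i| = e^{−α_i/ρ} for i = 1,…,n, the family (a_m η^m)_{m∈ℕⁿ} is absolutely summable and s < |Σ_{m∈ℕⁿ} a_m η^m|^ρ < t. -/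
/-!
By the `ℚ`-linear independence of `α` the weights `⟨m, α⟩` of distinct exponents are distinct, so
the minimal weight `v` is attained by a single monomial `a_{m₀} η^{m₀}`, of modulus
`|a_{m₀}| e^{-v/ρ}`, and every other monomial with `a_m ≠ 0` has weight at least some `w > v`
(weights tend to infinity). Comparing with a radius `ρ₁` at which the series converges absolutely,
`e^{-⟨m,α⟩/ρ} ≤ e^{-w/ρ} e^{w/ρ₁} e^{-⟨m,α⟩/ρ₁}` shows that these other monomials contribute
`O(e^{-w/ρ})` for `ρ ≤ ρ₁`. Hence `|Σ a_m η^m| = e^{-v/ρ} (|a_{m₀}| + O(e^{-(w-v)/ρ}))`, and the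
`ρ`-th power of the bracket tends to `1`.
-/

open Finset Filter Topology Real

lemma tendsto_exp_neg_div_nhdsGT_zero {d : ℝ} (hd : 0 < d) :
    Tendsto (fun ρ : ℝ => exp (-d / ρ)) (𝓝[>] 0) (𝓝 0) := by
  have h : Tendsto (fun ρ : ℝ => -(d * ρ⁻¹)) (𝓝[>] 0) atBot :=
    tendsto_neg_atTop_atBot.comp (tendsto_inv_nhdsGT_zero.const_mul_atTop hd)
  exact tendsto_exp_comp_nhds_zero.2 (h.congr fun ρ => by ring)

lemma tendsto_rpow_self_nhdsGT_zero {f : ℝ → ℝ} {A : ℝ} (hf : Tendsto f (𝓝[>] 0) (𝓝 A))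
    (hA : A ≠ 0) : Tendsto (fun ρ => f ρ ^ ρ) (𝓝[>] 0) (𝓝 1) := by
  simpa using hf.rpow (tendsto_id.mono_left nhdsWithin_le_nhds) (.inl hA)

lemma mul_exp_neg_div_rpow {c ρ : ℝ} (hc : 0 ≤ c) (hρ : ρ ≠ 0) (v : ℝ) :
    (c * exp (-v / ρ)) ^ ρ = c ^ ρ * exp (-v) := by
  rw [mul_rpow hc (exp_pos _).le, ← exp_mul, div_mul_cancel₀ _ hρ]

lemma eventually_rpow_mem_Ioo_of_abs_sub_le {A v w s t : ℝ} (B : ℝ) (hA : 0 < A) (hvw : v < w)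
    (hs : s < exp (-v)) (ht : exp (-v) < t) :
    ∀ᶠ ρ in 𝓝[>] 0, ∀ x : ℝ, |x - A * exp (-v / ρ)| ≤ B * exp (-w / ρ) →
      x ^ ρ ∈ Set.Ioo s t := by
  set err : ℝ → ℝ := fun ρ => B * exp (-(w - v) / ρ)
  have herr : Tendsto err (𝓝[>] 0) (𝓝 0) := by
    simpa [err] using (tendsto_exp_neg_div_nhdsGT_zero (sub_pos.2 hvw)).const_mul B
  have hlow : Tendsto (fun ρ => A - err ρ) (𝓝[>] 0) (𝓝 A) := by
    simpa using tendsto_const_nhds.sub herr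
  have hup : Tendsto (fun ρ => A + err ρ) (𝓝[>] 0) (𝓝 A) := by
    simpa using tendsto_const_nhds.add herr
  have hlow' := (tendsto_rpow_self_nhdsGT_zero hlow hA.ne').mul_const (exp (-v))
  have hup' := (tendsto_rpow_self_nhdsGT_zero hup hA.ne').mul_const (exp (-v))
  rw [one_mul] at hlow' hup'
  filter_upwards [self_mem_nhdsWithin, hlow.eventually_const_lt hA,
    hlow'.eventually_const_lt hs, hup'.eventually_lt_const ht] with ρ hρ hpos hslow htup x hx
  have hsplit : B * exp (-w / ρ) = err ρ * exp (-v / ρ) := by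
    rw [mul_assoc, ← exp_add]; ring_nf
  rw [hsplit, abs_le] at hx
  have hρ : 0 < ρ := hρ
  have hlowx : (A - err ρ) * exp (-v / ρ) ≤ x := by linarith
  have hupx : x ≤ (A + err ρ) * exp (-v / ρ) := by linarith
  have hlow0 : 0 ≤ (A - err ρ) * exp (-v / ρ) := by positivity
  constructor
  · calc s < (A - err ρ) ^ ρ * exp (-v) := hslow
      _ = ((A - err ρ) * exp (-v / ρ)) ^ ρ := (mul_exp_neg_div_rpow hpos.le hρ.ne' v).symm
      _ ≤ x ^ ρ := rpow_le_rpow hlow0 hlowx hρ.le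
  · have hup0 : 0 ≤ A + err ρ :=
      (mul_nonneg_iff_of_pos_right (exp_pos _)).1 (hlow0.trans (hlowx.trans hupx))
    calc x ^ ρ ≤ ((A + err ρ) * exp (-v / ρ)) ^ ρ := rpow_le_rpow (hlow0.trans hlowx) hupx hρ.le
      _ = (A + err ρ) ^ ρ * exp (-v) := mul_exp_neg_div_rpow hup0 hρ.ne' v
      _ < t := htup

lemma exp_neg_div_le_exp_neg_div_mul {φ w ρ ρ₁ : ℝ} (hw : w ≤ φ) (hρ : 0 < ρ) (hρρ₁ : ρ ≤ ρ₁) :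
    exp (-φ / ρ) ≤ exp (-w / ρ) * (exp (w / ρ₁) * exp (-φ / ρ₁)) := by
  rw [← exp_add, ← exp_add, exp_le_exp]
  have h : 0 ≤ (φ - w) * (ρ⁻¹ - ρ₁⁻¹) :=
    mul_nonneg (sub_nonneg.2 hw) (sub_nonneg.2 (inv_anti₀ hρ hρρ₁))
  simp only [div_eq_mul_inv]
  linarith

lemma summable_prod_pow_of_lt_one {ι : Type*} [Fintype ι] {q : ι → ℝ} (h0 : ∀ i, 0 ≤ q i)
    (h1 : ∀ i, q i < 1) : Summable fun m : ι → ℕ => ∏ i, q i ^ m i := by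
  classical
  refine summable_of_sum_le (c := ∏ i, (1 - q i)⁻¹)
    (fun m => prod_nonneg fun i _ => pow_nonneg (h0 i) _) fun s => ?_
  obtain ⟨M, hM⟩ := s.bddAbove
  have hs : s ⊆ Fintype.piFinset fun i => range (M i + 1) := fun m hm =>
    Fintype.mem_piFinset.2 fun i => mem_range.2 (Nat.lt_succ_of_le (hM hm i))
  calc ∑ m ∈ s, ∏ i, q i ^ m i
      ≤ ∑ m ∈ Fintype.piFinset fun i => range (M i + 1), ∏ i, q i ^ m i :=
        sum_le_sum_of_subset_of_nonneg hs fun m _ _ => prod_nonneg fun i _ => pow_nonneg (h0 i) _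
    _ = ∏ i, ∑ k ∈ range (M i + 1), q i ^ k := (prod_univ_sum _ _).symm
    _ ≤ ∏ i, (1 - q i)⁻¹ := prod_le_prod (fun i _ => sum_nonneg fun k _ => pow_nonneg (h0 i) k)
        fun i _ => tsum_geometric_of_lt_one (h0 i) (h1 i) ▸
          (summable_geometric_of_lt_one (h0 i) (h1 i)).sum_le_tsum _ fun k _ => pow_nonneg (h0 i) k

lemma Filter.Tendsto.exists_lt_forall_le_of_forall_lt {X : Type*} {f : X → ℝ}
    (hf : Tendsto f cofinite atTop) {s : Set X} {c : ℝ} (hs : ∀ x ∈ s, c < f x) :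
    ∃ w, c < w ∧ ∀ x ∈ s, w ≤ f x := by
  rcases s.eq_empty_or_nonempty with rfl | hne
  · exact ⟨c + 1, by linarith, by simp⟩
  · obtain ⟨x₀, hx₀, hmin⟩ := hf.exists_within_forall_le hne
    exact ⟨f x₀, hs x₀ hx₀, hmin⟩

def monomialWeight {ι : Type*} [Fintype ι] (α : ι → ℝ) (m : ι → ℕ) : ℝ := ∑ i, (m i : ℝ) * α i

section monomialWeight

variable {ι : Type*} [Fintype ι] {α : ι → ℝ}

lemma monomialWeight_nonneg (hα : ∀ i, 0 ≤ α i) (m : ι → ℕ) : 0 ≤ monomialWeight α m :=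
  sum_nonneg fun i _ => mul_nonneg (Nat.cast_nonneg _) (hα i)

lemma monomialWeight_injective (hα : LinearIndependent ℚ α) :
    Function.Injective (monomialWeight α) := by
  have hℕ := linearIndependent_iff_injective_fintypeLinearCombination.1 (hα.restrict_scalars' ℕ)
  intro m m' h
  exact hℕ (by simpa [Fintype.linearCombination_apply, monomialWeight, nsmul_eq_mul] using h)

lemma tendsto_monomialWeight_cofinite_atTop (hα : ∀ i, 0 < α i) :
    Tendsto (monomialWeight α) cofinite atTop := by
  classical
  refine tendsto_atTop.2 fun C => ?_
  refine (Set.finite_Iic fun i => ⌊C / α i⌋₊).subset fun m hm i => ?_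
  have hm : monomialWeight α m < C := not_le.1 hm
  refine Nat.le_floor ((le_div_iff₀ (hα i)).2 ((single_le_sum (f := fun j => (m j : ℝ) * α j)
    (fun j _ => mul_nonneg (Nat.cast_nonneg _) (hα j).le) (mem_univ i)).trans hm.le))

lemma exists_lt_forall_le_monomialWeight (hα : ∀ i, 0 < α i) (hind : LinearIndependent ℚ α)
    {s : Set (ι → ℕ)} {m₀ : ι → ℕ} (hmin : ∀ m ∈ s, monomialWeight α m₀ ≤ monomialWeight α m) :
    ∃ w, monomialWeight α m₀ < w ∧ ∀ m ∈ s, m ≠ m₀ → w ≤ monomialWeight α m := by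
  obtain ⟨w, hw, hle⟩ := (tendsto_monomialWeight_cofinite_atTop hα).exists_lt_forall_le_of_forall_lt
    (s := s \ {m₀}) fun m ⟨hm, hne⟩ =>
      (hmin m hm).lt_of_ne fun h => hne ((monomialWeight_injective hind h).symm)
  exact ⟨w, hw, fun m hm hne => hle m ⟨hm, hne⟩⟩

lemma exp_neg_monomialWeight_div (m : ι → ℕ) (ρ : ℝ) :
    exp (-monomialWeight α m / ρ) = ∏ i, exp (-α i / ρ) ^ m i := by
  simp_rw [← exp_nat_mul, ← exp_sum, monomialWeight, neg_div, sum_div, ← sum_neg_distrib]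
  congr 1
  exact sum_congr rfl fun i _ => by ring

end monomialWeight

section PowerSeries

variable {𝕜 : Type*} [NormedField 𝕜] {ι : Type*} [Fintype ι] {α : ι → ℝ}
  {a : (ι → ℕ) → 𝕜} {η : ι → 𝕜} {ρ ρ₁ : ℝ}

lemma norm_prod_pow_eq_exp (hη : ∀ i, ‖η i‖ = exp (-α i / ρ)) (m : ι → ℕ) :
    ‖∏ i, η i ^ m i‖ = exp (-monomialWeight α m / ρ) := by
  simp_rw [norm_prod, norm_pow, hη, exp_neg_monomialWeight_div]

lemma exists_summable_norm_mul_exp_neg (hα : ∀ i, 0 < α i) {R : ℝ}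
    (hgrowth : ∀ m : ι → ℕ, ‖a m‖ ≤ R ^ ∑ i, m i) :
    ∃ ρ₁, 0 < ρ₁ ∧ Summable fun m => ‖a m‖ * exp (-monomialWeight α m / ρ₁) := by
  have hsmall : ∀ᶠ ρ in 𝓝[>] 0, ∀ i, |R| * exp (-α i / ρ) < 1 := eventually_all.2 fun i =>
    ((tendsto_exp_neg_div_nhdsGT_zero (hα i)).const_mul |R|).eventually_lt_const (by simp)
  obtain ⟨ρ₁, hq, hρ₁⟩ := (hsmall.and self_mem_nhdsWithin).exists
  refine ⟨ρ₁, hρ₁, (summable_prod_pow_of_lt_one (fun i => by positivity) hq).of_nonneg_of_le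
    (fun m => by positivity) fun m => ?_⟩
  calc ‖a m‖ * exp (-monomialWeight α m / ρ₁)
      ≤ |R| ^ (∑ i, m i) * exp (-monomialWeight α m / ρ₁) := by
        gcongr
        exact (hgrowth m).trans ((le_abs_self _).trans (abs_pow R _).le)
    _ = ∏ i, (|R| * exp (-α i / ρ₁)) ^ m i := by
        rw [exp_neg_monomialWeight_div, ← prod_pow_eq_pow_sum, ← prod_mul_distrib]
        simp_rw [mul_pow]

lemma summable_norm_mul_prod_pow (hα : ∀ i, 0 ≤ α i)
    (hsum : Summable fun m => ‖a m‖ * exp (-monomialWeight α m / ρ₁))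
    (hρ : 0 < ρ) (hρρ₁ : ρ ≤ ρ₁) (hη : ∀ i, ‖η i‖ = exp (-α i / ρ)) :
    Summable fun m => ‖a m * ∏ i, η i ^ m i‖ := by
  refine hsum.of_nonneg_of_le (fun m => norm_nonneg _) fun m => ?_
  rw [norm_mul, norm_prod_pow_eq_exp hη]
  refine mul_le_mul_of_nonneg_left (exp_le_exp.2 ?_) (norm_nonneg _)
  rw [neg_div, neg_div, neg_le_neg_iff]
  exact div_le_div_of_nonneg_left (monomialWeight_nonneg hα m) hρ hρρ₁

lemma abs_norm_tsum_sub_norm_le [CompleteSpace 𝕜] (hα : ∀ i, 0 ≤ α i)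
    (hsum : Summable fun m => ‖a m‖ * exp (-monomialWeight α m / ρ₁)) {m₀ : ι → ℕ} {w : ℝ}
    (hgap : ∀ m, a m ≠ 0 → m ≠ m₀ → w ≤ monomialWeight α m)
    (hρ : 0 < ρ) (hρρ₁ : ρ ≤ ρ₁) (hη : ∀ i, ‖η i‖ = exp (-α i / ρ)) :
    |‖∑' m, a m * ∏ i, η i ^ m i‖ - ‖a m₀‖ * exp (-monomialWeight α m₀ / ρ)| ≤
      (exp (w / ρ₁) * ∑' m, ‖a m‖ * exp (-monomialWeight α m / ρ₁)) * exp (-w / ρ) := by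
  classical
  have hf := (summable_norm_mul_prod_pow hα hsum hρ hρρ₁ hη).of_norm
  rw [← norm_prod_pow_eq_exp hη, ← norm_mul]
  refine (abs_norm_sub_norm_le _ _).trans ?_
  rw [hf.tsum_eq_add_tsum_ite m₀, add_sub_cancel_left]
  refine tsum_of_norm_bounded ((hsum.hasSum.mul_left _).mul_right _) fun m => ?_
  split_ifs with hm
  · rw [norm_zero]
    positivity
  by_cases ha : a m = 0
  · rw [ha, zero_mul, norm_zero]
    positivity
  rw [norm_mul, norm_prod_pow_eq_exp hη]
  calc ‖a m‖ * exp (-monomialWeight α m / ρ)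
      ≤ ‖a m‖ * (exp (-w / ρ) * (exp (w / ρ₁) * exp (-monomialWeight α m / ρ₁))) := by
        gcongr
        exact exp_neg_div_le_exp_neg_div_mul (hgap m ha hm) hρ hρρ₁
    _ = exp (w / ρ₁) * (‖a m‖ * exp (-monomialWeight α m / ρ₁)) * exp (-w / ρ) := by ring

end PowerSeries

theorem monomial_dominance_estimate_general
    (n : ℕ) (α : Fin n → ℝ) (hα : ∀ i, 0 < α i)
    (hind : LinearIndependent ℚ α)
    (a : (Fin n → ℕ) → ℂ)
    (R : ℝ)
    (hgrowth : ∀ m : Fin n → ℕ, ‖a m‖ ≤ R ^ (∑ i, m i))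
    (v : ℝ)
    (hv : IsLeast {r : ℝ | ∃ m : Fin n → ℕ, a m ≠ 0 ∧ r = ∑ i, (m i : ℝ) * α i} v) :
    ∀ s t : ℝ, 0 ≤ s → s < Real.exp (-v) → Real.exp (-v) < t →
      ∃ ε : ℝ, 0 < ε ∧ ∀ ρ : ℝ, 0 < ρ → ρ ≤ ε →
        ∀ η : Fin n → ℂ, (∀ i, ‖η i‖ = Real.exp (-(α i) / ρ)) →
          Summable (fun m : Fin n → ℕ => ‖a m * ∏ i, η i ^ m i‖) ∧
          s < ‖∑' m : Fin n → ℕ, a m * ∏ i, η i ^ m i‖ ^ ρ ∧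
          ‖∑' m : Fin n → ℕ, a m * ∏ i, η i ^ m i‖ ^ ρ < t := by
  intro s t _ hsv htv
  obtain ⟨m₀, ham₀, rfl⟩ := hv.1
  obtain ⟨w, hvw, hgap⟩ := exists_lt_forall_le_monomialWeight hα hind
    (s := {m | a m ≠ 0}) fun m hm => hv.2 ⟨m, hm, rfl⟩
  obtain ⟨ρ₁, hρ₁, hsum⟩ := exists_summable_norm_mul_exp_neg hα hgrowth
  obtain ⟨ε, hε, hεsub⟩ := mem_nhdsGT_iff_exists_Ioc_subset.1
    ((eventually_rpow_mem_Ioo_of_abs_sub_le _ (norm_pos_iff.2 ham₀) hvw hsv htv).and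
      (Ioc_mem_nhdsGT hρ₁))
  refine ⟨ε, hε, fun ρ hρ hρε η hη => ?_⟩
  obtain ⟨hρt, -, hρρ₁⟩ := hεsub ⟨hρ, hρε⟩
  exact ⟨summable_norm_mul_prod_pow (fun i => (hα i).le) hsum hρ hρρ₁ hη,
    hρt _ (abs_norm_tsum_sub_norm_le (fun i => (hα i).le) hsum hgap hρ hρρ₁ hη)⟩

/-- The key estimate in the proof of Theorem C: if `a : ℕⁿ → ℂ` has the growth bound
`|a_m| ≤ R^{|m|}` and `v = min{⟨m,α⟩ : a_m ≠ 0}` for rationally independent positive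
weights `α`, then for all `0 ≤ s < e^{-v} < t` there is `ε > 0` such that for all
`ρ ∈ (0,ε]` and all `η` on the polycircle of radii `e^{-α_i/ρ}`, the series
`Σ a_m η^m` is absolutely summable and `s < |Σ a_m η^m|^ρ < t`. -/
theorem monomial_dominance_estimate
    (n : ℕ) (hn : 1 ≤ n) (α : Fin n → ℝ) (hα : ∀ i, 0 < α i)
    (hind : LinearIndependent ℚ α)
    (a : (Fin n → ℕ) → ℂ) (ha : ∃ m, a m ≠ 0)
    (R : ℝ) (hR : 1 ≤ R)
    (hgrowth : ∀ m : Fin n → ℕ, ‖a m‖ ≤ R ^ (∑ i, m i))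
    (v : ℝ)
    (hv : IsLeast {r : ℝ | ∃ m : Fin n → ℕ, a m ≠ 0 ∧ r = ∑ i, (m i : ℝ) * α i} v) :
    ∀ s t : ℝ, 0 ≤ s → s < Real.exp (-v) → Real.exp (-v) < t →
      ∃ ε : ℝ, 0 < ε ∧ ∀ ρ : ℝ, 0 < ρ → ρ ≤ ε →
        ∀ η : Fin n → ℂ, (∀ i, ‖η i‖ = Real.exp (-(α i) / ρ)) →
          Summable (fun m : Fin n → ℕ => ‖a m * ∏ i, η i ^ m i‖) ∧
          s < ‖∑' m : Fin n → ℕ, a m * ∏ i, η i ^ m i‖ ^ ρ ∧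
          ‖∑' m : Fin n → ℕ, a m * ∏ i, η i ^ m i‖ ^ ρ < t :=
  monomial_dominance_estimate_general n α hα hind a R hgrowth v hv
end
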